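/- Let n ≥ 3 be an integer. The function f(x) = x^(n-3)(x³ + (2-x²)^(3/2)) is strictly increasing on the interval [1, √2]. -/

import Mathlib

/-! The factor `x ^ (n - 3)` is positive and nondecreasing on `[1, √2]`, so it suffices that
`g x = x ^ 3 + (2 - x ^ 2) ^ (3 / 2)` is strictly increasing there; indeed
`g' x = 3 x (x - √(2 - x ^ 2))`, and `√(2 - x ^ 2) < 1 < x` for `1 < x`. -/

open Real Set

lemma MonotoneOn.mul_strictMonoOn {α M₀ : Type*} [Mul M₀] [Zero M₀] [Preorder M₀]
    [PosMulStrictMono M₀] [MulPosMono M₀] [Preorder α] {f g : α → M₀} {s : Set α}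
    (hf : MonotoneOn f s) (hg : StrictMonoOn g s) (hf₀ : ∀ x ∈ s, 0 < f x)
    (hg₀ : ∀ x ∈ s, 0 ≤ g x) : StrictMonoOn (f * g) s :=
  fun _ ha _ hb h ↦
    mul_lt_mul_of_le_of_lt_of_nonneg_of_pos (hf ha hb h.le) (hg ha hb h) (hg₀ _ ha) (hf₀ _ hb)

lemma hasDerivAt_pow_three_add_sub_sq_rpow (c x : ℝ) :
    HasDerivAt (fun x : ℝ => x ^ 3 + (c - x ^ 2) ^ ((3 : ℝ) / 2))
      (3 * x ^ 2 - 3 * x * (c - x ^ 2) ^ ((1 : ℝ) / 2)) x := by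
  have hinner : HasDerivAt (fun x : ℝ => c - x ^ 2) (-(2 * x)) x := by
    simpa using (hasDerivAt_pow 2 x).const_sub c
  have hcube : HasDerivAt (fun x : ℝ => x ^ 3) (3 * x ^ 2) x := by
    simpa using hasDerivAt_pow 3 x
  refine (hcube.add (hinner.rpow_const (Or.inr (by norm_num)))).congr_deriv ?_
  norm_num
  ring

lemma strictMonoOn_pow_three_add_two_sub_sq_rpow :
    StrictMonoOn (fun x : ℝ => x ^ 3 + (2 - x ^ 2) ^ ((3 : ℝ) / 2)) (Icc 1 (√2)) := by
  refine strictMonoOn_of_deriv_pos (convex_Icc _ _) ?_ fun x hx ↦ ?_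
  · exact (continuous_pow 3).continuousOn.add <|
      ContinuousOn.rpow_const (by fun_prop) fun _ _ ↦ Or.inr (by norm_num)
  rw [interior_Icc, mem_Ioo] at hx
  obtain ⟨h1x, hx2⟩ := hx
  have hx_sq : x ^ 2 < 2 := (Real.lt_sqrt (by linarith)).1 hx2
  rw [(hasDerivAt_pow_three_add_sub_sq_rpow 2 x).deriv]
  have hroot : (2 - x ^ 2) ^ ((1 : ℝ) / 2) < 1 :=
    Real.rpow_lt_one (by linarith) (by nlinarith) (by norm_num)
  nlinarith

theorem stmt_13 (n : ℕ) :
    StrictMonoOn (fun x : ℝ => x ^ (n - 3) * (x ^ 3 + (2 - x ^ 2) ^ ((3 : ℝ) / 2)))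
      (Set.Icc 1 (Real.sqrt 2)) := by
  refine MonotoneOn.mul_strictMonoOn (f := fun x : ℝ => x ^ (n - 3))
    (fun a ha b _ hab ↦ pow_le_pow_left₀ (by linarith [ha.1]) hab _)
    strictMonoOn_pow_three_add_two_sub_sq_rpow
    (fun x hx ↦ pow_pos (by linarith [hx.1]) _) fun x ⟨h1x, hx2⟩ ↦ ?_
  have hx_sq : x ^ 2 ≤ 2 := (Real.le_sqrt' (by linarith)).1 hx2
  exact add_nonneg (by positivity) (Real.rpow_nonneg (by linarith) _)
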